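/- arXiv:1512.07569 — 5 statements merged into one kernel-verified Lean document; each statement's English description precedes it below -/
import Mathlib

section
/- If the conic program CP (minimize c·x subject to x ∈ Affine and x ∈ K) has bounded optimal value, then any x ∈ Affine with c·x < c·e satisfies λ_min(x) < 1. -/
/-!
If `λ_min(x) ≥ 1` then `x - e ∈ K`: the supremum defining `λ_min(x)` is attained because `K` is
closed, and `K + ℝ≥0 e ⊆ K`. Then the whole ray `e + t (x - e)`, `t ≥ 0`, lies in `Affine ∩ K`,
and along it the objective `c·e + t (c·x - c·e)` decreases to `-∞`, contradicting boundedness.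
-/

open Filter RealInnerProductSpace

theorem IsClosed.sSup_mem_of_ne_zero {A : Set ℝ} (hA : IsClosed A) (h : sSup A ≠ 0) :
    sSup A ∈ A := by
  have hne : A.Nonempty := by
    by_contra hempty
    exact h (by rw [Set.not_nonempty_iff_eq_empty.mp hempty, Real.sSup_empty])
  have hbdd : BddAbove A := by
    by_contra hunbdd
    exact h (Real.sSup_of_not_bddAbove hunbdd)
  exact hA.csSup_mem hne hbdd

section Cone

variable {E : Type*} [AddCommGroup E] [Module ℝ E] {K : Set E}

theorem Convex.add_mem_of_smul_mem (hconv : Convex ℝ K)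
    (hcone : ∀ t : ℝ, 0 < t → ∀ x ∈ K, t • x ∈ K) {a b : E} (ha : a ∈ K) (hb : b ∈ K) :
    a + b ∈ K := by
  have hmid : (1 / 2 : ℝ) • a + (1 / 2 : ℝ) • b ∈ K :=
    hconv ha hb (by norm_num) (by norm_num) (by norm_num)
  simpa [smul_add, smul_smul] using hcone 2 two_pos _ hmid

theorem Convex.add_smul_mem_of_smul_mem (hconv : Convex ℝ K)
    (hcone : ∀ t : ℝ, 0 < t → ∀ x ∈ K, t • x ∈ K) {a v : E} (ha : a ∈ K) (hv : v ∈ K)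
    {t : ℝ} (ht : 0 ≤ t) : a + t • v ∈ K := by
  rcases ht.eq_or_lt with rfl | ht
  · simpa using ha
  · exact hconv.add_mem_of_smul_mem hcone ha (hcone t ht v hv)

theorem sub_mem_of_one_le_sSup [TopologicalSpace E] [IsTopologicalAddGroup E]
    [ContinuousSMul ℝ E] (hclosed : IsClosed K) (hconv : Convex ℝ K)
    (hcone : ∀ t : ℝ, 0 < t → ∀ x ∈ K, t • x ∈ K) {e x : E} (he : e ∈ K)
    (h : 1 ≤ sSup {l : ℝ | x - l • e ∈ K}) : x - e ∈ K := by
  set s := sSup {l : ℝ | x - l • e ∈ K}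
  have hs : x - s • e ∈ K :=
    (hclosed.preimage (by fun_prop : Continuous fun l : ℝ => x - l • e)).sSup_mem_of_ne_zero
      (one_pos.trans_le h).ne'
  have hsplit : x - e = (x - s • e) + (s - 1) • e := by module
  rw [hsplit]
  exact hconv.add_smul_mem_of_smul_mem hcone hs he (sub_nonneg.mpr h)

end Cone

theorem tendsto_inner_add_natCast_smul_atBot {E : Type*} [NormedAddCommGroup E]
    [InnerProductSpace ℝ E] {c v : E} (a : E) (hv : ⟪c, v⟫ < 0) :
    Tendsto (fun n : ℕ => ⟪c, a + (n : ℝ) • v⟫) atTop atBot := by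
  simp only [inner_add_right, inner_smul_right]
  exact tendsto_atBot_add_const_left _ _ (tendsto_natCast_atTop_atTop.atTop_mul_const_of_neg hv)

theorem lamMin_lt_one_of_bdd_general
    {E : Type*} [NormedAddCommGroup E] [InnerProductSpace ℝ E]
    (K : Set E) (hKclosed : IsClosed K) (hKconv : Convex ℝ K)
    (hKcone : ∀ t : ℝ, 0 < t → ∀ x ∈ K, t • x ∈ K)
    (S : AffineSubspace ℝ E) (c : E)
    (e : E) (heS : e ∈ S) (heK : e ∈ interior K)
    (lamMin : E → ℝ)
    (hlam : ∀ x, lamMin x = sSup {l : ℝ | x - l • e ∈ K})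
    (hbdd : BddBelow ((fun x => ⟪c, x⟫) '' ((S : Set E) ∩ K))) :
    ∀ x ∈ (S : Set E), ⟪c, x⟫ < ⟪c, e⟫ → lamMin x < 1 := by
  intro x hxS hcx
  by_contra! hlam_ge
  have he : e ∈ K := interior_subset heK
  have hxe : x - e ∈ K :=
    sub_mem_of_one_le_sSup hKclosed hKconv hKcone he (hlam x ▸ hlam_ge)
  have hdescent : ⟪c, x - e⟫ < 0 := by rw [inner_sub_right]; linarith
  refine not_bddBelow_of_tendsto_atBot (tendsto_inner_add_natCast_smul_atBot e hdescent)
    (hbdd.mono ?_)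
  rintro _ ⟨n, rfl⟩
  have hrayS : e + (n : ℝ) • (x - e) ∈ S := by
    simpa [add_comm] using S.smul_vsub_vadd_mem (n : ℝ) hxS heS heS
  exact ⟨_, ⟨hrayS, hKconv.add_smul_mem_of_smul_mem hKcone he hxe n.cast_nonneg⟩, rfl⟩

/-- Lemma 2.2: if CP has bounded optimal value, then any `x ∈ Affine` with
`c·x < c·e` satisfies `λ_min(x) < 1`. -/
theorem lamMin_lt_one_of_bdd
    {E : Type*} [NormedAddCommGroup E] [InnerProductSpace ℝ E] [FiniteDimensional ℝ E]
    (K : Set E) (hKclosed : IsClosed K) (hKconv : Convex ℝ K)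
    (hKcone : ∀ t : ℝ, 0 < t → ∀ x ∈ K, t • x ∈ K)
    (hKpointed : ∀ x, x ∈ K → -x ∈ K → x = 0)
    (hKproper : K ≠ Set.univ)
    (S : AffineSubspace ℝ E) (c : E)
    (e : E) (heS : e ∈ S) (heK : e ∈ interior K)
    (lamMin : E → ℝ)
    (hlam : ∀ x, lamMin x = sSup {l : ℝ | x - l • e ∈ K})
    (hbdd : BddBelow ((fun x => ⟪c, x⟫) '' ((S : Set E) ∩ K))) :
    ∀ x ∈ (S : Set E), ⟪c, x⟫ < ⟪c, e⟫ → lamMin x < 1 :=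
  lamMin_lt_one_of_bdd_general K hKclosed hKconv hKcone S c e heS heK lamMin hlam hbdd
end

section
/- Let z < c·e. If x* solves sup{λ_min(x) : x ∈ Affine, c·x = z}, then its radial projection π(x*) = e + (1/(1−λ_min(x*)))(x* − e) is optimal for CP. Conversely, if π* is optimal for CP with optimal value z*, then x* := e + ((c·e − z)/(c·e − z*))(π* − e) is optimal for the sup problem and π* = π(x*). -/
/-!
Write `g y = ⟪c, e⟫ - ⟪c, y⟫`. Along the ray `t ↦ e + t • (y - e)` both `g` and `1 - λ_min`
scale by `t`, and the ray stays in `K` exactly while `t * (1 - λ_min y) ≤ 1`. Pushing `y ∈ S`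
with `g y > 0` to the end of its ray and comparing with the optimal value of CP gives
`g y ≤ (1 - λ_min y) * g p` for every CP-optimal `p`, with equality iff `π y` is CP-optimal.
On the level set `⟪c, ·⟫ = z` the bound reads `1 - λ_min ≥ (⟪c, e⟫ - z) / g p`, and it is attained
at the point of that level on the ray through `p`, because `λ_min p = 0`. So maximizing `λ_min`
on the level set means attaining equality, i.e. `π x*` being CP-optimal.

The same ray argument gives `-e ∉ K` (otherwise `2 • p - e` would beat `p`), which together with
the closedness of `K` makes `λ_min x` the largest `l` with `x - l • e ∈ K`.
-/

open RealInnerProductSpace Set Filter Topology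

theorem exists_pos_add_smul_mem {E : Type*} [AddCommGroup E] [TopologicalSpace E]
    [ContinuousAdd E] [Module ℝ E] [ContinuousSMul ℝ E] {s : Set E} {x : E}
    (hx : x ∈ interior s) (v : E) : ∃ δ : ℝ, 0 < δ ∧ x + δ • v ∈ s := by
  have hlim : Tendsto (fun δ : ℝ => x + δ • v) (𝓝 0) (𝓝 x) :=
    (continuous_const.add (continuous_id.smul continuous_const)).tendsto' 0 x (by simp)
  have h : ∀ᶠ δ : ℝ in 𝓝[>] 0, x + δ • v ∈ s :=
    nhdsWithin_le_nhds (hlim.eventually (mem_interior_iff_mem_nhds.mp hx))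
  exact (h.and self_mem_nhdsWithin).exists.imp fun δ h => ⟨h.2, h.1⟩

namespace ConvexCone

section Algebraic

variable {E : Type*} [AddCommGroup E] [Module ℝ E]

def ofConvex {K : Set E} (hK : Convex ℝ K) (hsmul : ∀ t : ℝ, 0 < t → ∀ x ∈ K, t • x ∈ K) :
    ConvexCone ℝ E where
  carrier := K
  smul_mem' t ht x hx := hsmul t ht x hx
  add_mem' x hx y hy := by
    convert hsmul 2 two_pos _ (hK hx hy (by norm_num : (0 : ℝ) ≤ 1 / 2)
      (by norm_num : (0 : ℝ) ≤ 1 / 2) (by norm_num)) using 1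
    module

noncomputable def lambdaMin (C : ConvexCone ℝ E) (e x : E) : ℝ :=
  sSup {l : ℝ | x - l • e ∈ C}

noncomputable def radialProjection (C : ConvexCone ℝ E) (e x : E) : E :=
  e + (1 - C.lambdaMin e x)⁻¹ • (x - e)

theorem sub_smul_mem_of_le {C : ConvexCone ℝ E} {e x : E} (he : e ∈ C) {l l' : ℝ}
    (hl : l' ≤ l) (h : x - l • e ∈ C) : x - l' • e ∈ C := by
  rcases hl.eq_or_lt with rfl | hlt
  · exact h
  · convert C.add_mem h (C.smul_mem (sub_pos.2 hlt) he) using 1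
    module

end Algebraic

section Topological

variable {E : Type*} [AddCommGroup E] [TopologicalSpace E] [IsTopologicalAddGroup E]
  [Module ℝ E] [ContinuousSMul ℝ E] {C : ConvexCone ℝ E} {e x : E}

theorem exists_sub_smul_mem (he : e ∈ interior (C : Set E)) (x : E) :
    ∃ l : ℝ, x - l • e ∈ C := by
  obtain ⟨δ, hδ, hmem⟩ := exists_pos_add_smul_mem he x
  refine ⟨-δ⁻¹, ?_⟩
  convert C.smul_mem (inv_pos.2 hδ) hmem using 1
  rw [smul_add, inv_smul_smul₀ hδ.ne']
  module

theorem bddAbove_setOf_sub_smul_mem (hC : IsClosed (C : Set E)) (he : e ∈ C) (hne : -e ∉ C)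
    (x : E) : BddAbove {l : ℝ | x - l • e ∈ C} := by
  by_contra hunb
  have hall (l : ℝ) : x - l • e ∈ C := by
    obtain ⟨l', hl', hll'⟩ := not_bddAbove_iff.mp hunb l
    exact C.sub_smul_mem_of_le he hll'.le hl'
  have hlim : Tendsto (fun l : ℝ => l⁻¹ • x - e) atTop (𝓝 (-e)) := by
    simpa using ((tendsto_inv_atTop_zero (𝕜 := ℝ)).smul_const x).sub_const e
  refine hne (hC.mem_of_tendsto hlim ?_)
  filter_upwards [eventually_gt_atTop 0] with l hl
  show l⁻¹ • x - e ∈ C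
  convert C.smul_mem (inv_pos.2 hl) (hall l) using 1
  rw [smul_sub, inv_smul_smul₀ hl.ne']

variable (hC : IsClosed (C : Set E)) (he : e ∈ interior (C : Set E)) (hne : -e ∉ C)
include hC he hne

theorem setOf_sub_smul_mem_eq_Iic (x : E) :
    {l : ℝ | x - l • e ∈ C} = Iic (C.lambdaMin e x) := by
  have hbdd := C.bddAbove_setOf_sub_smul_mem hC (interior_subset he) hne x
  have hmem : C.lambdaMin e x ∈ {l : ℝ | x - l • e ∈ C} :=
    (hC.preimage (continuous_const.sub (continuous_id.smul continuous_const))).csSup_mem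
      (C.exists_sub_smul_mem he x) hbdd
  ext l
  exact ⟨fun hl => le_csSup hbdd hl, fun hl => C.sub_smul_mem_of_le (interior_subset he) hl hmem⟩

theorem sub_smul_mem_iff_le_lambdaMin {l : ℝ} : x - l • e ∈ C ↔ l ≤ C.lambdaMin e x :=
  Set.ext_iff.mp (C.setOf_sub_smul_mem_eq_Iic hC he hne x) l

theorem mem_iff_lambdaMin_nonneg : x ∈ C ↔ 0 ≤ C.lambdaMin e x := by
  simpa using C.sub_smul_mem_iff_le_lambdaMin hC he hne (x := x) (l := 0)

theorem lambdaMin_add_smul_sub {t : ℝ} (ht : 0 < t) :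
    C.lambdaMin e (e + t • (x - e)) = 1 + t * (C.lambdaMin e x - 1) := by
  refine eq_of_forall_le_iff fun l => ?_
  have hscale : e + t • (x - e) - l • e = t • (x - ((l + t - 1) / t) • e) := by
    rw [smul_sub t x (((l + t - 1) / t) • e), smul_smul, mul_div_cancel₀ _ ht.ne']
    module
  rw [← C.sub_smul_mem_iff_le_lambdaMin hC he hne, hscale, C.smul_mem_iff ht,
    C.sub_smul_mem_iff_le_lambdaMin hC he hne, div_le_iff₀ ht]
  constructor <;> intro h <;> linarith

end Topological

end ConvexCone

section ConicProgram

variable {E : Type*} [NormedAddCommGroup E] [InnerProductSpace ℝ E]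
  {C : ConvexCone ℝ E} {S : AffineSubspace ℝ E} {c e p q x y : E} {z : ℝ}

def IsConicMinimizer (S : AffineSubspace ℝ E) (C : ConvexCone ℝ E) (c p : E) : Prop :=
  p ∈ S ∧ p ∈ C ∧ ∀ y ∈ S, y ∈ C → ⟪c, p⟫ ≤ ⟪c, y⟫

def IsLambdaMinMaximizer (S : AffineSubspace ℝ E) (C : ConvexCone ℝ E) (c e : E) (z : ℝ)
    (x : E) : Prop :=
  x ∈ S ∧ ⟪c, x⟫ = z ∧ ∀ y ∈ S, ⟪c, y⟫ = z → C.lambdaMin e y ≤ C.lambdaMin e x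

theorem AffineSubspace.add_smul_sub_mem (heS : e ∈ S) (hx : x ∈ S) (t : ℝ) :
    e + t • (x - e) ∈ S := by
  simpa [add_comm] using S.smul_vsub_vadd_mem t hx heS heS

theorem inner_add_smul_sub (t : ℝ) :
    ⟪c, e + t • (x - e)⟫ = ⟪c, e⟫ + t * (⟪c, x⟫ - ⟪c, e⟫) := by
  rw [inner_add_right, real_inner_smul_right, inner_sub_right]

theorem IsConicMinimizer.inner_eq (hp : IsConicMinimizer S C c p)
    (hq : IsConicMinimizer S C c q) : ⟪c, p⟫ = ⟪c, q⟫ :=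
  le_antisymm (hp.2.2 q hq.1 hq.2.1) (hq.2.2 p hp.1 hp.2.1)

theorem IsConicMinimizer.inner_lt_of_mem_interior (hp : IsConicMinimizer S C c p)
    (heS : e ∈ S) (he : e ∈ interior (C : Set E)) (hc : ∃ v ∈ S.direction, ⟪c, v⟫ ≠ 0) :
    ⟪c, p⟫ < ⟪c, e⟫ := by
  obtain ⟨v, hvS, hcv⟩ : ∃ v ∈ S.direction, ⟪c, v⟫ < 0 := by
    obtain ⟨v, hvS, hcv⟩ := hc
    rcases hcv.lt_or_gt with hneg | hpos
    · exact ⟨v, hvS, hneg⟩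
    · exact ⟨-v, S.direction.neg_mem hvS, by rwa [inner_neg_right, neg_lt_zero]⟩
  obtain ⟨δ, hδ, hmem⟩ := exists_pos_add_smul_mem he v
  have hmemS : e + δ • v ∈ S := by
    simpa [add_comm] using
      AffineSubspace.vadd_mem_of_mem_direction (S.direction.smul_mem δ hvS) heS
  have hle := hp.2.2 _ hmemS hmem
  rw [inner_add_right, real_inner_smul_right] at hle
  nlinarith

theorem IsConicMinimizer.neg_notMem (hp : IsConicMinimizer S C c p) (heS : e ∈ S)
    (hpe : ⟪c, p⟫ < ⟪c, e⟫) : -e ∉ C := by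
  intro hne
  have hmem : e + (2 : ℝ) • (p - e) ∈ C := by
    convert C.add_mem (C.smul_mem two_pos hp.2.1) hne using 1
    module
  have hle := hp.2.2 _ (S.add_smul_sub_mem heS hp.1 2) hmem
  rw [inner_add_smul_sub] at hle
  linarith

variable (hC : IsClosed (C : Set E)) (he : e ∈ interior (C : Set E)) (heS : e ∈ S)
  (hp : IsConicMinimizer S C c p) (hpe : ⟪c, p⟫ < ⟪c, e⟫)
include hC he heS hp hpe

theorem IsConicMinimizer.mul_sub_inner_le (hy : y ∈ S) {t : ℝ} (ht : 0 < t)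
    (hty : t * (1 - C.lambdaMin e y) ≤ 1) : t * (⟪c, e⟫ - ⟪c, y⟫) ≤ ⟪c, e⟫ - ⟪c, p⟫ := by
  have hne := hp.neg_notMem heS hpe
  have hmem : e + t • (y - e) ∈ C := by
    rw [C.mem_iff_lambdaMin_nonneg hC he hne, C.lambdaMin_add_smul_sub hC he hne ht]
    linarith
  have hle := hp.2.2 _ (S.add_smul_sub_mem heS hy t) hmem
  rw [inner_add_smul_sub] at hle
  linarith

theorem IsConicMinimizer.sub_inner_le (hy : y ∈ S) (hyz : ⟪c, y⟫ < ⟪c, e⟫) :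
    ⟪c, e⟫ - ⟪c, y⟫ ≤ (1 - C.lambdaMin e y) * (⟪c, e⟫ - ⟪c, p⟫) := by
  rcases lt_or_ge (C.lambdaMin e y) 1 with hlt | hge
  · have hgap : 0 < 1 - C.lambdaMin e y := sub_pos.2 hlt
    have := hp.mul_sub_inner_le hC he heS hpe hy (inv_pos.2 hgap) (inv_mul_cancel₀ hgap.ne').le
    rwa [inv_mul_le_iff₀ hgap] at this
  · -- the whole ray from `e` through `y` lies in `C`, while `⟪c, ·⟫` is unbounded below on it
    exfalso
    have hd : 0 < ⟪c, e⟫ - ⟪c, p⟫ := sub_pos.2 hpe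
    have hg : 0 < ⟪c, e⟫ - ⟪c, y⟫ := sub_pos.2 hyz
    have ht : 0 < (⟪c, e⟫ - ⟪c, p⟫ + 1) / (⟪c, e⟫ - ⟪c, y⟫) := by positivity
    have := hp.mul_sub_inner_le hC he heS hpe hy ht (by nlinarith)
    rw [div_mul_cancel₀ _ hg.ne'] at this
    linarith

theorem IsConicMinimizer.lambdaMin_lt_one (hy : y ∈ S) (hyz : ⟪c, y⟫ < ⟪c, e⟫) :
    C.lambdaMin e y < 1 := by
  have := hp.sub_inner_le hC he heS hpe hy hyz
  nlinarith

theorem IsConicMinimizer.lambdaMin_eq_zero : C.lambdaMin e p = 0 := by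
  have h0 : 0 ≤ C.lambdaMin e p :=
    (C.mem_iff_lambdaMin_nonneg hC he (hp.neg_notMem heS hpe)).1 hp.2.1
  by_contra hne0
  have hpos : 0 < C.lambdaMin e p := lt_of_le_of_ne h0 (Ne.symm hne0)
  have := hp.mul_sub_inner_le hC he heS hpe hp.1 (t := 1 + C.lambdaMin e p) (by positivity)
    (by nlinarith)
  nlinarith

theorem IsConicMinimizer.lambdaMin_add_smul_sub {t : ℝ} (ht : 0 < t) :
    C.lambdaMin e (e + t • (p - e)) = 1 - t := by
  rw [C.lambdaMin_add_smul_sub hC he (hp.neg_notMem heS hpe) ht,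
    hp.lambdaMin_eq_zero hC he heS hpe]
  ring

theorem IsConicMinimizer.isLambdaMinMaximizer_add_smul_sub (hz : z < ⟪c, e⟫) :
    IsLambdaMinMaximizer S C c e z (e + ((⟪c, e⟫ - z) / (⟪c, e⟫ - ⟪c, p⟫)) • (p - e)) := by
  have hd : 0 < ⟪c, e⟫ - ⟪c, p⟫ := sub_pos.2 hpe
  have hs : 0 < (⟪c, e⟫ - z) / (⟪c, e⟫ - ⟪c, p⟫) := div_pos (sub_pos.2 hz) hd
  refine ⟨S.add_smul_sub_mem heS hp.1 _, ?_, fun y hy hyz => ?_⟩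
  · rw [inner_add_smul_sub]
    field_simp
    ring
  · rw [hp.lambdaMin_add_smul_sub hC he heS hpe hs, le_sub_comm, div_le_iff₀ hd, ← hyz]
    exact hp.sub_inner_le hC he heS hpe hy (hyz ▸ hz)

theorem IsConicMinimizer.radialProjection_add_smul_sub {t : ℝ} (ht : 0 < t) :
    C.radialProjection e (e + t • (p - e)) = p := by
  rw [ConvexCone.radialProjection, hp.lambdaMin_add_smul_sub hC he heS hpe ht, sub_sub_cancel,
    add_sub_cancel_left, inv_smul_smul₀ ht.ne', add_sub_cancel]

theorem IsLambdaMinMaximizer.isConicMinimizer_radialProjection (hz : z < ⟪c, e⟫)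
    (hx : IsLambdaMinMaximizer S C c e z x) :
    IsConicMinimizer S C c (C.radialProjection e x) := by
  obtain ⟨hxS, hxz, hxmax⟩ := hx
  have hd : 0 < ⟪c, e⟫ - ⟪c, p⟫ := sub_pos.2 hpe
  have hs : 0 < (⟪c, e⟫ - z) / (⟪c, e⟫ - ⟪c, p⟫) := div_pos (sub_pos.2 hz) hd
  have hgap : 0 < 1 - C.lambdaMin e x :=
    sub_pos.2 (hp.lambdaMin_lt_one hC he heS hpe hxS (hxz ▸ hz))
  have hle : (1 - C.lambdaMin e x) * (⟪c, e⟫ - ⟪c, p⟫) ≤ ⟪c, e⟫ - z := by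
    obtain ⟨h0S, h0z, -⟩ := hp.isLambdaMinMaximizer_add_smul_sub hC he heS hpe hz
    have := hxmax _ h0S h0z
    rw [hp.lambdaMin_add_smul_sub hC he heS hpe hs] at this
    rw [← le_div_iff₀ hd]
    linarith
  have hne := hp.neg_notMem heS hpe
  refine ⟨S.add_smul_sub_mem heS hxS _, ?_,
    fun y hy hyC => (?_ : _ ≤ _).trans (hp.2.2 y hy hyC)⟩
  · rw [ConvexCone.radialProjection, C.mem_iff_lambdaMin_nonneg hC he hne,
      C.lambdaMin_add_smul_sub hC he hne (inv_pos.2 hgap)]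
    field_simp
    linarith
  · rw [ConvexCone.radialProjection, inner_add_smul_sub, hxz]
    field_simp
    nlinarith

end ConicProgram

theorem radial_projection_optimality_general
    {E : Type*} [NormedAddCommGroup E] [InnerProductSpace ℝ E]
    (K : Set E) (hKclosed : IsClosed K) (hKconv : Convex ℝ K)
    (hKcone : ∀ t : ℝ, 0 < t → ∀ x ∈ K, t • x ∈ K)
    (S : AffineSubspace ℝ E) (c : E)
    (hc : ∃ v ∈ S.direction, ⟪c, v⟫ ≠ 0)
    (e : E) (heS : e ∈ S) (heK : e ∈ interior K)
    (lamMin : E → ℝ)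
    (hlam : ∀ x, lamMin x = sSup {l : ℝ | x - l • e ∈ K})
    (π : E → E)
    (hπ : ∀ x, π x = e + (1 - lamMin x)⁻¹ • (x - e))
    (z zstar : ℝ) (hz : z < ⟪c, e⟫)
    (hzstar : ∃ x, (x ∈ S ∧ x ∈ K ∧ ∀ y, y ∈ S → y ∈ K → ⟪c, x⟫ ≤ ⟪c, y⟫) ∧
      ⟪c, x⟫ = zstar) :
    (∀ xs, xs ∈ S → ⟪c, xs⟫ = z →
        (∀ y, y ∈ S → ⟪c, y⟫ = z → lamMin y ≤ lamMin xs) →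
        (π xs ∈ S ∧ π xs ∈ K ∧ ∀ y, y ∈ S → y ∈ K → ⟪c, π xs⟫ ≤ ⟪c, y⟫)) ∧
    (∀ ps, (ps ∈ S ∧ ps ∈ K ∧ ∀ y, y ∈ S → y ∈ K → ⟪c, ps⟫ ≤ ⟪c, y⟫) →
        ((e + ((⟪c, e⟫ - z) / (⟪c, e⟫ - zstar)) • (ps - e)) ∈ S ∧
          ⟪c, e + ((⟪c, e⟫ - z) / (⟪c, e⟫ - zstar)) • (ps - e)⟫ = z ∧
          (∀ y, y ∈ S → ⟪c, y⟫ = z →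
            lamMin y ≤ lamMin (e + ((⟪c, e⟫ - z) / (⟪c, e⟫ - zstar)) • (ps - e))) ∧
          ps = π (e + ((⟪c, e⟫ - z) / (⟪c, e⟫ - zstar)) • (ps - e)))) := by
  obtain ⟨C, rfl⟩ : ∃ C : ConvexCone ℝ E, (C : Set E) = K := ⟨.ofConvex hKconv hKcone, rfl⟩
  obtain rfl : lamMin = C.lambdaMin e := funext hlam
  obtain rfl : π = C.radialProjection e := funext hπ
  obtain ⟨p, hp, rfl⟩ : ∃ p, IsConicMinimizer S C c p ∧ ⟪c, p⟫ = zstar := hzstar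
  have hpe : ⟪c, p⟫ < ⟪c, e⟫ := hp.inner_lt_of_mem_interior heS heK hc
  refine ⟨fun x hxS hxz hxmax => IsLambdaMinMaximizer.isConicMinimizer_radialProjection
    hKclosed heK heS hp hpe hz ⟨hxS, hxz, hxmax⟩, fun q hq => ?_⟩
  have hq : IsConicMinimizer S C c q := hq
  have hqe : ⟪c, q⟫ < ⟪c, e⟫ := hp.inner_eq hq ▸ hpe
  rw [hp.inner_eq hq]
  obtain ⟨hxS, hxz, hxmax⟩ := hq.isLambdaMinMaximizer_add_smul_sub hKclosed heK heS hqe hz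
  have hs : 0 < (⟪c, e⟫ - z) / (⟪c, e⟫ - ⟪c, q⟫) := div_pos (sub_pos.2 hz) (sub_pos.2 hqe)
  exact ⟨hxS, hxz, hxmax, (hq.radialProjection_add_smul_sub hKclosed heK heS hqe hs).symm⟩

/-- Theorem 2.3: radial projection gives the correspondence between optimal solutions
of CP and of the equivalent problem `sup{λ_min(x) : x ∈ Affine, c·x = z}` for `z < c·e`. -/
theorem radial_projection_optimality
    {E : Type*} [NormedAddCommGroup E] [InnerProductSpace ℝ E] [FiniteDimensional ℝ E]
    (K : Set E) (hKclosed : IsClosed K) (hKconv : Convex ℝ K)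
    (hKcone : ∀ t : ℝ, 0 < t → ∀ x ∈ K, t • x ∈ K)
    (hKpointed : ∀ x, x ∈ K → -x ∈ K → x = 0)
    (hKproper : K ≠ Set.univ)
    (S : AffineSubspace ℝ E) (c : E)
    (hc : ∃ v ∈ S.direction, ⟪c, v⟫ ≠ 0)
    (e : E) (heS : e ∈ S) (heK : e ∈ interior K)
    (lamMin : E → ℝ)
    (hlam : ∀ x, lamMin x = sSup {l : ℝ | x - l • e ∈ K})
    (π : E → E)
    (hπ : ∀ x, π x = e + (1 - lamMin x)⁻¹ • (x - e))
    (z zstar : ℝ) (hz : z < ⟪c, e⟫)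
    (hzstar : ∃ x, (x ∈ S ∧ x ∈ K ∧ ∀ y, y ∈ S → y ∈ K → ⟪c, x⟫ ≤ ⟪c, y⟫) ∧
      ⟪c, x⟫ = zstar) :
    (∀ xs, xs ∈ S → ⟪c, xs⟫ = z →
        (∀ y, y ∈ S → ⟪c, y⟫ = z → lamMin y ≤ lamMin xs) →
        (π xs ∈ S ∧ π xs ∈ K ∧ ∀ y, y ∈ S → y ∈ K → ⟪c, π xs⟫ ≤ ⟪c, y⟫)) ∧
    (∀ ps, (ps ∈ S ∧ ps ∈ K ∧ ∀ y, y ∈ S → y ∈ K → ⟪c, ps⟫ ≤ ⟪c, y⟫) →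
        ((e + ((⟪c, e⟫ - z) / (⟪c, e⟫ - zstar)) • (ps - e)) ∈ S ∧
          ⟪c, e + ((⟪c, e⟫ - z) / (⟪c, e⟫ - zstar)) • (ps - e)⟫ = z ∧
          (∀ y, y ∈ S → ⟪c, y⟫ = z →
            lamMin y ≤ lamMin (e + ((⟪c, e⟫ - z) / (⟪c, e⟫ - zstar)) • (ps - e))) ∧
          ps = π (e + ((⟪c, e⟫ - z) / (⟪c, e⟫ - zstar)) • (ps - e)))) :=
  radial_projection_optimality_general K hKclosed hKconv hKcone S c hc e heS heK lamMin hlam π hπ z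
    zstar hz hzstar
end

section
/- The optimal value λ*_{min,z} of sup{λ_min(x) : x ∈ Affine, c·x = z} equals (z − z*)/(c·e − z*), where z* is the optimal value of CP. -/
/-!
If `x ∈ S` has `c·x = z` and `x - λe ∈ K` with `λ < 1`, then `(x - λe)/(1 - λ)` is a feasible point of
objective `(z - λ c·e)/(1 - λ) ≥ z*`, i.e. `λ ≤ (z - z*)/(c·e - z*)`; since `{λ | x - λe ∈ K}` is a
down-set, this bound holds for every such `λ`. It is attained on the segment from an optimal point `x*`
towards `e`. Division by `c·e - z*` is legitimate because `e` is interior and `c` is not orthogonal to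
the direction of `S`, so `e` is not optimal.
-/

open Filter Topology RealInnerProductSpace

section Cone

variable {E : Type*} [AddCommGroup E] [Module ℝ E] {K : Set E}

theorem add_mem_of_convex_of_smul_mem (hKconv : Convex ℝ K)
    (hKcone : ∀ t : ℝ, 0 < t → ∀ x ∈ K, t • x ∈ K) {a b : E} (ha : a ∈ K) (hb : b ∈ K) :
    a + b ∈ K := by
  have hmid := hKconv ha hb one_half_pos.le one_half_pos.le (add_halves 1)
  convert hKcone 2 two_pos _ hmid using 1
  rw [smul_add, smul_smul, smul_smul]
  norm_num

theorem sub_smul_mem_of_le (hKconv : Convex ℝ K)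
    (hKcone : ∀ t : ℝ, 0 < t → ∀ x ∈ K, t • x ∈ K) {e x : E} (heK : e ∈ K) {l l' : ℝ}
    (hx : x - l • e ∈ K) (hl : l' ≤ l) : x - l' • e ∈ K := by
  rcases hl.lt_or_eq with hlt | rfl
  · convert add_mem_of_convex_of_smul_mem hKconv hKcone hx (hKcone _ (sub_pos.2 hlt) e heK)
      using 1
    rw [sub_smul]
    abel
  · exact hx

end Cone

section LinearProgram

variable {E : Type*} [AddCommGroup E] [Module ℝ E] {K : Set E} {S : AffineSubspace ℝ E}
  (f : E →ₗ[ℝ] ℝ) {e x : E} {zstar : ℝ}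

theorem mul_sub_le_of_sub_smul_mem (hKcone : ∀ t : ℝ, 0 < t → ∀ x ∈ K, t • x ∈ K)
    (heS : e ∈ S) (hmin : ∀ y ∈ S, y ∈ K → zstar ≤ f y) (hxS : x ∈ S) {l : ℝ}
    (hx : x - l • e ∈ K) (hl : l < 1) : l * (f e - zstar) ≤ f x - zstar := by
  have h1l : 0 < 1 - l := sub_pos.2 hl
  have hy : AffineMap.lineMap e x (1 - l)⁻¹ = (1 - l)⁻¹ • (x - l • e) := by
    rw [AffineMap.lineMap_apply_module']
    match_scalars
    · field_simp
    · field_simp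
      ring
  have hfeas := hmin _ (AffineMap.lineMap_mem _ heS hxS)
    (hy ▸ hKcone _ (inv_pos.2 h1l) _ hx)
  rw [hy, map_smul, map_sub, map_smul, smul_eq_mul, smul_eq_mul, le_inv_mul_iff₀ h1l] at hfeas
  linarith

theorem le_div_of_sub_smul_mem (hKconv : Convex ℝ K)
    (hKcone : ∀ t : ℝ, 0 < t → ∀ x ∈ K, t • x ∈ K) (heK : e ∈ K) (heS : e ∈ S)
    (hmin : ∀ y ∈ S, y ∈ K → zstar ≤ f y) (hlt : zstar < f e) (hxS : x ∈ S) (hxe : f x < f e)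
    {l : ℝ} (hx : x - l • e ∈ K) : l ≤ (f x - zstar) / (f e - zstar) := by
  set t₀ := (f x - zstar) / (f e - zstar)
  have hgap : 0 < f e - zstar := sub_pos.2 hlt
  have ht₀ : t₀ < 1 := (div_lt_one hgap).2 (by linarith)
  by_contra! hl
  -- a level strictly between `t₀` and `min l 1` still lies in the down-set and violates the bound
  set l' := min l ((t₀ + 1) / 2)
  have hl' : t₀ < l' := lt_min hl (by linarith)
  have hl'1 : l' < 1 := (min_le_right _ _).trans_lt (by linarith)
  have hbound := mul_sub_le_of_sub_smul_mem f hKcone heS hmin hxS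
    (sub_smul_mem_of_le hKconv hKcone heK hx (min_le_left _ _)) hl'1
  exact hl'.not_ge ((le_div_iff₀ hgap).2 hbound)

theorem lineMap_sub_smul_mem (hKcone : ∀ t : ℝ, 0 < t → ∀ x ∈ K, t • x ∈ K) (hxK : x ∈ K)
    {t : ℝ} (ht : t < 1) : AffineMap.lineMap x e t - t • e ∈ K := by
  convert hKcone _ (sub_pos.2 ht) x hxK using 1
  rw [AffineMap.lineMap_apply_module]
  abel

end LinearProgram

section Interior

variable {E : Type*} [AddCommGroup E] [Module ℝ E] [TopologicalSpace E] [ContinuousAdd E]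
  [ContinuousSMul ℝ E] {K : Set E} {e : E}

theorem exists_pos_add_smul_mem_of_mem_interior (he : e ∈ interior K) (v : E) :
    ∃ t : ℝ, 0 < t ∧ e + t • v ∈ K := by
  have hcont : Tendsto (fun t : ℝ ↦ e + t • v) (𝓝 0) (𝓝 e) := by
    refine Continuous.tendsto' ?_ _ _ (by simp)
    fun_prop
  have hnear : ∀ᶠ t in 𝓝[>] (0 : ℝ), e + t • v ∈ K :=
    nhdsWithin_le_nhds (hcont.eventually (mem_interior_iff_mem_nhds.1 he))
  exact (hnear.and self_mem_nhdsWithin).exists.imp fun t ht ↦ ⟨ht.2, ht.1⟩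

theorem exists_sub_smul_mem_of_mem_interior (hKcone : ∀ t : ℝ, 0 < t → ∀ x ∈ K, t • x ∈ K)
    (he : e ∈ interior K) (x : E) : ∃ l : ℝ, x - l • e ∈ K := by
  obtain ⟨t, ht, hmem⟩ := exists_pos_add_smul_mem_of_mem_interior he x
  refine ⟨-t⁻¹, ?_⟩
  convert hKcone _ (inv_pos.2 ht) _ hmem using 1
  rw [smul_add, smul_smul, inv_mul_cancel₀ ht.ne', one_smul, neg_smul, sub_neg_eq_add, add_comm]

theorem exists_mem_lt_of_mem_interior (f : E →ₗ[ℝ] ℝ) {S : AffineSubspace ℝ E}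
    (he : e ∈ interior K) (heS : e ∈ S) {v : E} (hv : v ∈ S.direction) (hfv : f v ≠ 0) :
    ∃ y ∈ S, y ∈ K ∧ f y < f e := by
  obtain ⟨t, ht, hmem⟩ := exists_pos_add_smul_mem_of_mem_interior he (-(f v) • v)
  refine ⟨_, ?_, hmem, ?_⟩
  · rw [add_comm]
    exact AffineSubspace.vadd_mem_of_mem_direction
      (S.direction.smul_mem _ (S.direction.smul_mem _ hv)) heS
  · simp only [map_add, map_smul, smul_eq_mul]
    linarith [mul_pos ht (mul_self_pos.2 hfv)]

theorem isGreatest_sSup_sub_smul_mem (f : E →ₗ[ℝ] ℝ) {S : AffineSubspace ℝ E}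
    (hKconv : Convex ℝ K) (hKcone : ∀ t : ℝ, 0 < t → ∀ x ∈ K, t • x ∈ K)
    (he : e ∈ interior K) (heS : e ∈ S) {xs : E} (hxsS : xs ∈ S) (hxsK : xs ∈ K)
    (hmin : ∀ y ∈ S, y ∈ K → f xs ≤ f y) (hlt : f xs < f e) {z : ℝ} (hz : z < f e) :
    IsGreatest {r | ∃ x, x ∈ S ∧ f x = z ∧ r = sSup {l : ℝ | x - l • e ∈ K}}
      ((z - f xs) / (f e - f xs)) := by
  set t₀ := (z - f xs) / (f e - f xs)
  have heK := interior_subset he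
  have hbound : ∀ x ∈ S, f x = z → ∀ l, x - l • e ∈ K → l ≤ t₀ := by
    rintro x hxS rfl l hx
    exact le_div_of_sub_smul_mem f hKconv hKcone heK heS hmin hlt hxS hz hx
  have hx₀S : AffineMap.lineMap xs e t₀ ∈ S := AffineMap.lineMap_mem _ hxsS heS
  have hx₀z : f (AffineMap.lineMap xs e t₀) = z := by
    have ht₀ : t₀ * (f e - f xs) = z - f xs := div_mul_cancel₀ _ (sub_pos.2 hlt).ne'
    rw [AffineMap.lineMap_apply_module', map_add, map_smul, map_sub, smul_eq_mul]
    linarith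
  have hx₀K : AffineMap.lineMap xs e t₀ - t₀ • e ∈ K :=
    lineMap_sub_smul_mem hKcone hxsK ((div_lt_one (sub_pos.2 hlt)).2 (by linarith))
  refine ⟨⟨_, hx₀S, hx₀z, ?_⟩, ?_⟩
  · exact (IsGreatest.csSup_eq (a := t₀) ⟨hx₀K, hbound _ hx₀S hx₀z⟩).symm
  · rintro r ⟨x, hxS, hxz, rfl⟩
    exact csSup_le (exists_sub_smul_mem_of_mem_interior hKcone he x) (hbound x hxS hxz)

end Interior

theorem lamMinStar_eq_general
    {E : Type*} [NormedAddCommGroup E] [InnerProductSpace ℝ E]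
    (K : Set E) (hKconv : Convex ℝ K)
    (hKcone : ∀ t : ℝ, 0 < t → ∀ x ∈ K, t • x ∈ K)
    (S : AffineSubspace ℝ E) (c : E)
    (hc : ∃ v ∈ S.direction, ⟪c, v⟫ ≠ 0)
    (e : E) (heS : e ∈ S) (heK : e ∈ interior K)
    (lamMin : E → ℝ)
    (hlam : ∀ x, lamMin x = sSup {l : ℝ | x - l • e ∈ K})
    (z zstar : ℝ) (hz : z < ⟪c, e⟫)
    (hzstar : ∃ x, (x ∈ S ∧ x ∈ K ∧ ∀ y, y ∈ S → y ∈ K → ⟪c, x⟫ ≤ ⟪c, y⟫) ∧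
      ⟪c, x⟫ = zstar) :
    sSup {r : ℝ | ∃ x, x ∈ S ∧ ⟪c, x⟫ = z ∧ r = lamMin x} =
      (z - zstar) / (⟪c, e⟫ - zstar) := by
  obtain ⟨xs, ⟨hxsS, hxsK, hxsmin⟩, rfl⟩ := hzstar
  obtain ⟨v, hv, hcv⟩ := hc
  obtain ⟨y, hyS, hyK, hye⟩ :=
    exists_mem_lt_of_mem_interior (innerₛₗ ℝ c) heK heS hv hcv
  simp_rw [hlam]
  exact (isGreatest_sSup_sub_smul_mem (innerₛₗ ℝ c) hKconv hKcone heK heS hxsS hxsK hxsmin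
    ((hxsmin y hyS hyK).trans_lt hye) hz).csSup_eq

/-- Lemma 2.4: `λ*_{min,z} = (z − z*)/(c·e − z*)`. -/
theorem lamMinStar_eq
    {E : Type*} [NormedAddCommGroup E] [InnerProductSpace ℝ E] [FiniteDimensional ℝ E]
    (K : Set E) (hKclosed : IsClosed K) (hKconv : Convex ℝ K)
    (hKcone : ∀ t : ℝ, 0 < t → ∀ x ∈ K, t • x ∈ K)
    (hKpointed : ∀ x, x ∈ K → -x ∈ K → x = 0)
    (hKproper : K ≠ Set.univ)
    (S : AffineSubspace ℝ E) (c : E)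
    (hc : ∃ v ∈ S.direction, ⟪c, v⟫ ≠ 0)
    (e : E) (heS : e ∈ S) (heK : e ∈ interior K)
    (lamMin : E → ℝ)
    (hlam : ∀ x, lamMin x = sSup {l : ℝ | x - l • e ∈ K})
    (z zstar : ℝ) (hz : z < ⟪c, e⟫)
    (hzstar : ∃ x, (x ∈ S ∧ x ∈ K ∧ ∀ y, y ∈ S → y ∈ K → ⟪c, x⟫ ≤ ⟪c, y⟫) ∧
      ⟪c, x⟫ = zstar) :
    sSup {r : ℝ | ∃ x, x ∈ S ∧ ⟪c, x⟫ = z ∧ r = lamMin x} =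
      (z - zstar) / (⟪c, e⟫ - zstar) :=
  lamMinStar_eq_general K hKconv hKcone S c hc e heS heK lamMin hlam z zstar hz hzstar
end

section
/- If T : E → Ē is a linear transformation whose image intersects the interior of a hyperbolicity cone K̄ with hyperbolic polynomial p̄, then the pullback K := {x ∈ E : T(x) ∈ K̄} is a hyperbolicity cone with hyperbolic polynomial p(x) := p̄(T x). -/
/-- A univariate real polynomial has only real roots (over `ℂ`). -/
def RealRooted (q : Polynomial ℝ) : Prop :=
  ∀ z : ℂ, (q.map (algebraMap ℝ ℂ)).IsRoot z → z.im = 0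

/-- `K` is a hyperbolicity cone with hyperbolic polynomial (represented by) `P`,
homogeneous of degree `n`. -/
def IsHypConeWith (d n : ℕ) (K : Set (EuclideanSpace ℝ (Fin d)))
    (P : MvPolynomial (Fin d) ℝ) : Prop :=
  IsClosed K ∧ Convex ℝ K ∧ (∀ t : ℝ, 0 < t → ∀ x ∈ K, t • x ∈ K) ∧
  (interior K).Nonempty ∧ P.IsHomogeneous n ∧
  (∀ x₀ ∈ interior K,
    interior K =
      connectedComponentIn {x | MvPolynomial.eval (fun i => x i) P ≠ 0} x₀) ∧
  ∀ e ∈ interior K, ∀ x : EuclideanSpace ℝ (Fin d), ∃ q : Polynomial ℝ,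
    (∀ t : ℝ, q.eval t = MvPolynomial.eval (fun i => x i - t * e i) P) ∧
    RealRooted q

/-!
Composing with `T` turns `p̄` into a homogeneous polynomial `p` of the same degree, and for
`e` in the interior of the pullback `p(x - t e) = p̄(T x - t T e)` as polynomials in `t`, so
real-rootedness is inherited. The geometric content is that, because the image of `T` meets
`int K̄` and `K̄` is convex, `int K = T⁻¹(int K̄)`; the latter is convex, hence connected, so it is
the whole connected component of `T⁻¹{p̄ ≠ 0} = {p ≠ 0}` that it spans.
-/

open MvPolynomial Filter Set Topology

theorem Continuous.preimage_connectedComponentIn_eq {α β : Type*} [TopologicalSpace α]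
    [TopologicalSpace β] {f : α → β} (hf : Continuous f) {F : Set β} {x : α} (hx : f x ∈ F)
    (hpre : IsPreconnected (f ⁻¹' connectedComponentIn F (f x))) :
    f ⁻¹' connectedComponentIn F (f x) = connectedComponentIn (f ⁻¹' F) x := by
  have hxmem : x ∈ f ⁻¹' connectedComponentIn F (f x) := mem_connectedComponentIn hx
  refine (hpre.subset_connectedComponentIn hxmem
    (preimage_mono (connectedComponentIn_subset _ _))).antisymm ?_
  rw [hf.continuousOn.preimage_connectedComponentIn (f x)]
  exact subset_biUnion_of_mem (u := fun z => connectedComponentIn (f ⁻¹' F) z) hxmem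

theorem Convex.interior_preimage_linearMap {E F : Type*} [AddCommGroup E] [Module ℝ E]
    [TopologicalSpace E] [IsTopologicalAddGroup E] [ContinuousSMul ℝ E] [AddCommGroup F]
    [Module ℝ F] [TopologicalSpace F] [IsTopologicalAddGroup F] [ContinuousConstSMul ℝ F]
    {K : Set F} (hK : Convex ℝ K) (T : E →ₗ[ℝ] F) (hT : Continuous T)
    (himg : ∃ x, T x ∈ interior K) : interior (T ⁻¹' K) = T ⁻¹' interior K := by
  refine (preimage_interior_subset_interior_preimage hT).antisymm' fun x hx => ?_
  obtain ⟨x₁, hx₁⟩ := himg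
  -- push `x` slightly beyond itself, away from `x₁`; then `x` lies strictly between the two
  have hray : ∀ᶠ t in 𝓝 (0 : ℝ), x + t • (x - x₁) ∈ T ⁻¹' K :=
    (Continuous.tendsto' (by fun_prop) 0 x (by simp)).eventually
      (mem_interior_iff_mem_nhds.mp hx)
  obtain ⟨ε, hεK, hε⟩ :=
    ((hray.filter_mono nhdsWithin_le_nhds).and (self_mem_nhdsWithin (s := Ioi 0))).exists
  replace hε : (0 : ℝ) < ε := hε
  have hcombo : (ε / (1 + ε)) • T x₁ + (1 / (1 + ε)) • T (x + ε • (x - x₁)) = T x := by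
    simp only [map_add, map_smul, map_sub]
    match_scalars
    · field_simp; ring
    · field_simp
  rw [mem_preimage, ← hcombo]
  exact hK.combo_interior_self_mem_interior hx₁ hεK (by positivity) (by positivity)
    (by field_simp; ring)

namespace LinearMap

variable {d d' : ℕ} (T : EuclideanSpace ℝ (Fin d) →ₗ[ℝ] EuclideanSpace ℝ (Fin d'))

noncomputable def coordPoly (i : Fin d') : MvPolynomial (Fin d) ℝ :=
  ∑ j, C (T (EuclideanSpace.single j 1) i) * X j

theorem eval_coordPoly (x : EuclideanSpace ℝ (Fin d)) (i : Fin d') :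
    eval (fun j => x j) (T.coordPoly i) = T x i := by
  have hx : x = ∑ j, x j • EuclideanSpace.single j (1 : ℝ) := by
    simpa using ((EuclideanSpace.basisFun (Fin d) ℝ).sum_repr x).symm
  conv_rhs => rw [hx]
  simp [coordPoly, mul_comm]

theorem isHomogeneous_coordPoly (i : Fin d') : (T.coordPoly i).IsHomogeneous 1 :=
  IsHomogeneous.sum _ _ _ fun _ _ => (isHomogeneous_X _ _).C_mul _

theorem eval_bind₁_coordPoly (P : MvPolynomial (Fin d') ℝ) (x : EuclideanSpace ℝ (Fin d)) :
    eval (fun j => x j) (bind₁ T.coordPoly P) = eval (fun i => T x i) P := by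
  calc eval (fun j => x j) (bind₁ T.coordPoly P)
      = eval (fun i => eval (fun j => x j) (T.coordPoly i)) P := eval₂Hom_bind₁ _ _ _ P
    _ = eval (fun i => T x i) P := by simp only [eval_coordPoly]

theorem isHomogeneous_bind₁_coordPoly {P : MvPolynomial (Fin d') ℝ} {n : ℕ}
    (hP : P.IsHomogeneous n) : (bind₁ T.coordPoly P).IsHomogeneous n := by
  simpa using hP.aeval _ T.isHomogeneous_coordPoly

end LinearMap

/-- If `T : E → Ē` is linear and its image meets the interior of a hyperbolicity cone
`K̄` with hyperbolic polynomial `p̄`, then the pullback `{x : T x ∈ K̄}` is a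
hyperbolicity cone with hyperbolic polynomial `p(x) = p̄(T x)`. -/
theorem pullback_isHypConeWith {d d' n : ℕ}
    (T : EuclideanSpace ℝ (Fin d) →ₗ[ℝ] EuclideanSpace ℝ (Fin d'))
    {Kbar : Set (EuclideanSpace ℝ (Fin d'))} {Pbar : MvPolynomial (Fin d') ℝ}
    (h : IsHypConeWith d' n Kbar Pbar)
    (himg : ∃ x, T x ∈ interior Kbar) :
    ∃ P : MvPolynomial (Fin d) ℝ,
      (∀ x : EuclideanSpace ℝ (Fin d),
        MvPolynomial.eval (fun i => x i) P =
          MvPolynomial.eval (fun i => T x i) Pbar) ∧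
      IsHypConeWith d n {x | T x ∈ Kbar} P := by
  obtain ⟨hcl, hconv, hcone, -, hhom, hcomp, hroot⟩ := h
  have hT : Continuous T := T.continuous_of_finiteDimensional
  have hint : interior (T ⁻¹' Kbar) = T ⁻¹' interior Kbar :=
    hconv.interior_preimage_linearMap T hT himg
  have heval := T.eval_bind₁_coordPoly Pbar
  refine ⟨bind₁ T.coordPoly Pbar, heval, hcl.preimage hT, hconv.linear_preimage T,
    fun t ht x hx => by simpa using hcone t ht _ hx, ?_, T.isHomogeneous_bind₁_coordPoly hhom,
    fun x₀ hx₀ => ?_, fun e he x => ?_⟩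
  · obtain ⟨x₁, hx₁⟩ := himg
    exact ⟨x₁, hint.superset hx₁⟩
  · have hTx₀ : T x₀ ∈ interior Kbar := hint.subset hx₀
    have hnonzero : {x | eval (fun i => x i) (bind₁ T.coordPoly Pbar) ≠ 0} =
        T ⁻¹' {y | eval (fun i => y i) Pbar ≠ 0} := by
      ext x; simp [heval x]
    rw [hnonzero, show {x | T x ∈ Kbar} = T ⁻¹' Kbar from rfl, hint, hcomp _ hTx₀]
    refine hT.preimage_connectedComponentIn_eq
      (connectedComponentIn_subset _ _ (hcomp _ hTx₀ ▸ hTx₀)) ?_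
    rw [← hcomp _ hTx₀, ← hint]
    exact (hconv.linear_preimage T).interior.isPreconnected
  · obtain ⟨q, hq, hreal⟩ := hroot (T e) (hint.subset he) (T x)
    refine ⟨q, fun t => ?_, hreal⟩
    have hshift : (fun i => x i - t * e i) = fun i => (x - t • e) i := by
      funext i; simp
    rw [hq, hshift, heval]
    simp
end

section
/- For all u ∈ E, ‖u‖_∞ = max_j |λ_j(u)|, where λ_j(u) are the eigenvalues of u (the roots of λ ↦ p(u − λe)). -/
/-!
Homogeneity of `p` makes the eigenvalues equivariant: those of `x + s • e` are the eigenvalues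
of `x` shifted by `s`, and those of `c • x` are the eigenvalues of `x` scaled by `c`. Since
`int K` is the connected component of `{p ≠ 0}` containing `e`, a point `x ∈ K` has only
nonnegative eigenvalues (a negative one `λ` would put the zero `x - λ • e` of `p` into
`x + int K ⊆ int K`), and a point with only positive eigenvalues lies in `int K` (the ray
`x + s • e`, `s ≥ 0`, avoids the zeros of `p` and eventually enters `int K`). Hence `e ± v ∈ K`
confines the eigenvalues of `v` to `[-1, 1]`, while eigenvalues in `(-1, 1)` give `e ± v ∈ K`;
rescaling `v` identifies the gauge of `{v | e ± v ∈ K}` with the largest `|λ|`.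
-/

open Set Filter Topology Pointwise

theorem MvPolynomial.IsHomogeneous.eval_smul {σ R : Type*} [CommSemiring R]
    {P : MvPolynomial σ R} {n : ℕ} (hP : P.IsHomogeneous n) (c : R) (x : σ → R) :
    eval (c • x) P = c ^ n * eval x P := by
  rw [eval_eq, eval_eq, Finset.mul_sum]
  refine Finset.sum_congr rfl fun m hm => ?_
  have hdeg : ∑ i ∈ m.support, m i = n := by
    simpa [Finsupp.weight_apply, Finsupp.sum] using hP (mem_support_iff.mp hm)
  simp only [Pi.smul_apply, smul_eq_mul, mul_pow, Finset.prod_mul_distrib,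
    Finset.prod_pow_eq_pow_sum, hdeg]
  ring

section EigenvalueSet

variable {E : Type*} [AddCommGroup E] [Module ℝ E]

lemma Convex.add_mem_of_forall_smul_mem {K : Set E} (hK : Convex ℝ K)
    (hKcone : ∀ t : ℝ, 0 < t → ∀ x ∈ K, t • x ∈ K) {x y : E} (hx : x ∈ K) (hy : y ∈ K) :
    x + y ∈ K := by
  have := hKcone 2 two_pos _ (hK hx hy (by norm_num : (0 : ℝ) ≤ 1 / 2)
    (by norm_num : (0 : ℝ) ≤ 1 / 2) (by norm_num))
  rwa [smul_add, smul_smul, smul_smul, show (2 : ℝ) * (1 / 2) = 1 by norm_num, one_smul,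
    one_smul] at this

def eigenvalueSet (p : E → ℝ) (e x : E) : Set ℝ := {t | p (x - t • e) = 0}

variable {p : E → ℝ} {n : ℕ} {e : E}

lemma mem_eigenvalueSet_smul (hp : ∀ (c : ℝ) x, p (c • x) = c ^ n * p x) {c t : ℝ}
    (hc : c ≠ 0) (x : E) : t ∈ eigenvalueSet p e (c • x) ↔ t / c ∈ eigenvalueSet p e x := by
  have : c • x - t • e = c • (x - (t / c) • e) := by
    rw [smul_sub, smul_smul, mul_div_cancel₀ _ hc]
  simp only [eigenvalueSet, mem_ofPred_eq, this, hp, mul_eq_zero, pow_ne_zero n hc, false_or]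

lemma mem_eigenvalueSet_neg (hp : ∀ (c : ℝ) x, p (c • x) = c ^ n * p x) {t : ℝ} (x : E) :
    t ∈ eigenvalueSet p e (-x) ↔ -t ∈ eigenvalueSet p e x := by
  simpa [div_neg] using mem_eigenvalueSet_smul hp (e := e) (t := t) (neg_ne_zero.2 one_ne_zero) x

lemma mem_eigenvalueSet_sub (hp : ∀ (c : ℝ) x, p (c • x) = c ^ n * p x) {t : ℝ} (v : E) :
    t ∈ eigenvalueSet p e (e - v) ↔ 1 - t ∈ eigenvalueSet p e v := by
  have : e - v - t • e = (-1 : ℝ) • (v - (1 - t) • e) := by module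
  simp only [eigenvalueSet, mem_ofPred_eq, this, hp, mul_eq_zero,
    pow_ne_zero n (by norm_num : (-1 : ℝ) ≠ 0), false_or]

lemma eq_zero_of_mem_eigenvalueSet_zero (hp : ∀ (c : ℝ) x, p (c • x) = c ^ n * p x)
    (he : p e ≠ 0) {t : ℝ} (ht : t ∈ eigenvalueSet p e 0) : t = 0 := by
  have : (-t) ^ n * p e = 0 := by simpa [eigenvalueSet, ← neg_smul, hp] using ht
  simpa using (pow_eq_zero_iff'.mp ((mul_eq_zero.mp this).resolve_right he)).1

variable [TopologicalSpace E]

lemma ConvexCone.add_mem_interior [ContinuousAdd E] (C : ConvexCone ℝ E) {x y : E} (hx : x ∈ C)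
    (hy : y ∈ interior (C : Set E)) : x + y ∈ interior (C : Set E) := by
  refine mem_interior.2
    ⟨x +ᵥ interior (C : Set E), ?_, isOpen_interior.vadd x, vadd_mem_vadd_set hy⟩
  rintro _ ⟨z, hz, rfl⟩
  exact C.add_mem hx (interior_subset hz)

variable [ContinuousSMul ℝ E]

lemma ConvexCone.smul_mem_interior (C : ConvexCone ℝ E) {t : ℝ} (ht : 0 < t) {x : E}
    (hx : x ∈ interior (C : Set E)) : t • x ∈ interior (C : Set E) := by
  refine interior_mono ?_ (interior_smul₀ ht.ne' (C : Set E) ▸ smul_mem_smul_set hx)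
  rintro _ ⟨y, hy, rfl⟩
  exact C.smul_mem ht hy

lemma exists_apply_sub_smul_ne_zero [IsTopologicalAddGroup E] (hpc : Continuous p)
    (hp : ∀ (c : ℝ) x, p (c • x) = c ^ n * p x) (he : p e ≠ 0) (x : E) :
    ∃ t : ℝ, p (x - t • e) ≠ 0 := by
  by_contra! hx
  -- `p (s • x - e) = s ^ n * p (x - s⁻¹ • e)` vanishes for `s ≠ 0`, hence also at `s = 0`.
  have hzero : ∀ s : ℝ, s ≠ 0 → p (s • x - e) = 0 := fun s hs => by
    rw [show s • x - e = s • (x - s⁻¹ • e) by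
      rw [smul_sub, smul_smul, mul_inv_cancel₀ hs, one_smul], hp, hx, mul_zero]
  have hlim : Tendsto (fun s : ℝ => p (s • x - e)) (𝓝[≠] 0) (𝓝 (p ((0 : ℝ) • x - e))) :=
    ((hpc.comp (by fun_prop)).tendsto 0).mono_left nhdsWithin_le_nhds
  have hneg : p (-e) = 0 := by
    simpa using tendsto_nhds_unique hlim
      (tendsto_const_nhds.congr' (eventually_nhdsWithin_of_forall fun s hs => (hzero s hs).symm))
  rw [← neg_one_smul ℝ e, hp] at hneg
  exact he ((mul_eq_zero.mp hneg).resolve_left (pow_ne_zero n (by norm_num)))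

variable [ContinuousAdd E]

lemma exists_pos_add_smul_mem_interior {K : Set E} (he : e ∈ interior K) (x : E) :
    ∃ s : ℝ, 0 < s ∧ e + s • x ∈ interior K ∧ e - s • x ∈ interior K := by
  have hnhds (y : E) : ∀ᶠ t in 𝓝 (0 : ℝ), e + t • y ∈ interior K :=
    (Continuous.tendsto' (by fun_prop) 0 e (by simp)).eventually (isOpen_interior.mem_nhds he)
  obtain ⟨s, ⟨hplus, hminus⟩, hs⟩ := ((((hnhds x).and (hnhds (-x))).filter_mono
    nhdsWithin_le_nhds).and (self_mem_nhdsWithin (s := Ioi (0 : ℝ)))).exists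
  exact ⟨s, hs, hplus, by simpa [sub_eq_add_neg] using hminus⟩

variable {C : ConvexCone ℝ E}

lemma nonneg_of_mem_eigenvalueSet
    (hC : interior (C : Set E) = connectedComponentIn {x | p x ≠ 0} e)
    (he : e ∈ interior (C : Set E)) {x : E} (hx : x ∈ C) {t : ℝ}
    (ht : t ∈ eigenvalueSet p e x) : 0 ≤ t := by
  by_contra! htneg
  have hmem : x + (-t) • e ∈ interior (C : Set E) :=
    C.add_mem_interior hx (C.smul_mem_interior (neg_pos.2 htneg) he)
  rw [hC] at hmem
  exact connectedComponentIn_subset _ _ hmem (by simpa [eigenvalueSet, sub_eq_add_neg] using ht)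

lemma mem_interior_of_forall_mem_eigenvalueSet_pos
    (hC : interior (C : Set E) = connectedComponentIn {x | p x ≠ 0} e)
    (he : e ∈ interior (C : Set E)) {x : E} (hx : ∀ t ∈ eigenvalueSet p e x, 0 < t) :
    x ∈ interior (C : Set E) := by
  obtain ⟨t, ht, hxt, -⟩ := exists_pos_add_smul_mem_interior he x
  have hend : x + t⁻¹ • e ∈ interior (C : Set E) := by
    simpa [smul_smul, inv_mul_cancel₀ ht.ne', add_comm] using
      C.smul_mem_interior (inv_pos.2 ht) hxt
  have hsegment : (fun s : ℝ => x + s • e) '' Icc 0 t⁻¹ ⊆ {x | p x ≠ 0} := by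
    rintro _ ⟨s, hs, rfl⟩ hzero
    have := hx (-s) (by simpa [eigenvalueSet] using hzero)
    linarith [hs.1]
  have hconn := (isPreconnected_Icc.image _ (by fun_prop)).subset_connectedComponentIn
    ⟨t⁻¹, ⟨(inv_pos.2 ht).le, le_rfl⟩, rfl⟩ hsegment
  rw [hC] at hend ⊢
  rw [connectedComponentIn_eq hend]
  exact hconn ⟨0, ⟨le_rfl, (inv_pos.2 ht).le⟩, by simp⟩

lemma le_one_of_mem_eigenvalueSet (hp : ∀ (c : ℝ) x, p (c • x) = c ^ n * p x)
    (hC : interior (C : Set E) = connectedComponentIn {x | p x ≠ 0} e)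
    (he : e ∈ interior (C : Set E)) {v : E} (hv : e - v ∈ C) {t : ℝ}
    (ht : t ∈ eigenvalueSet p e v) : t ≤ 1 := by
  have := nonneg_of_mem_eigenvalueSet hC he hv
    ((mem_eigenvalueSet_sub hp v).2 (by rwa [sub_sub_cancel]))
  linarith

lemma sub_mem_interior_of_forall_mem_eigenvalueSet_lt_one
    (hp : ∀ (c : ℝ) x, p (c • x) = c ^ n * p x)
    (hC : interior (C : Set E) = connectedComponentIn {x | p x ≠ 0} e)
    (he : e ∈ interior (C : Set E)) {v : E} (hv : ∀ t ∈ eigenvalueSet p e v, t < 1) :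
    e - v ∈ interior (C : Set E) :=
  mem_interior_of_forall_mem_eigenvalueSet_pos hC he fun t ht => by
    linarith [hv _ ((mem_eigenvalueSet_sub hp v).1 ht)]

lemma abs_le_one_of_mem_eigenvalueSet (hp : ∀ (c : ℝ) x, p (c • x) = c ^ n * p x)
    (hC : interior (C : Set E) = connectedComponentIn {x | p x ≠ 0} e)
    (he : e ∈ interior (C : Set E)) {v : E} (hplus : e + v ∈ C) (hminus : e - v ∈ C) {t : ℝ}
    (ht : t ∈ eigenvalueSet p e v) : |t| ≤ 1 := by
  refine abs_le.2 ⟨?_, le_one_of_mem_eigenvalueSet hp hC he hminus ht⟩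
  have := le_one_of_mem_eigenvalueSet hp hC he (v := -v) (by rwa [sub_neg_eq_add])
    ((mem_eigenvalueSet_neg hp v).2 (by rwa [neg_neg]))
  linarith

lemma add_and_sub_mem_interior_of_abs_lt_one (hp : ∀ (c : ℝ) x, p (c • x) = c ^ n * p x)
    (hC : interior (C : Set E) = connectedComponentIn {x | p x ≠ 0} e)
    (he : e ∈ interior (C : Set E)) {v : E} (hv : ∀ t ∈ eigenvalueSet p e v, |t| < 1) :
    e + v ∈ interior (C : Set E) ∧ e - v ∈ interior (C : Set E) := by
  refine ⟨?_, sub_mem_interior_of_forall_mem_eigenvalueSet_lt_one hp hC he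
    fun t ht => (abs_lt.1 (hv t ht)).2⟩
  simpa using sub_mem_interior_of_forall_mem_eigenvalueSet_lt_one hp hC he (v := -v)
    fun t ht => by linarith [(abs_lt.1 (hv _ ((mem_eigenvalueSet_neg hp v).1 ht))).1]

lemma abs_le_of_eq_smul (hp : ∀ (c : ℝ) x, p (c • x) = c ^ n * p x)
    (hC : interior (C : Set E) = connectedComponentIn {x | p x ≠ 0} e)
    (he : e ∈ interior (C : Set E)) {u v : E} {s : ℝ} (hs : 0 ≤ s)
    (hv : e + v ∈ C ∧ e - v ∈ C) (hu : u = s • v) {t : ℝ}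
    (ht : t ∈ eigenvalueSet p e u) : |t| ≤ s := by
  rcases hs.eq_or_lt with rfl | hs
  · rw [zero_smul] at hu
    subst hu
    have hpe : p e ≠ 0 := connectedComponentIn_subset _ _ (hC ▸ he)
    rw [eq_zero_of_mem_eigenvalueSet_zero hp hpe ht, abs_zero]
  · have := abs_le_one_of_mem_eigenvalueSet hp hC he hv.1 hv.2
      ((mem_eigenvalueSet_smul hp hs.ne' v).1 (hu ▸ ht))
    rwa [abs_div, abs_of_pos hs, div_le_one hs] at this

lemma exists_eq_smul_of_abs_lt (hp : ∀ (c : ℝ) x, p (c • x) = c ^ n * p x)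
    (hC : interior (C : Set E) = connectedComponentIn {x | p x ≠ 0} e)
    (he : e ∈ interior (C : Set E)) {u : E} {s : ℝ} (hs : 0 < s)
    (hu : ∀ t ∈ eigenvalueSet p e u, |t| < s) :
    ∃ v, (e + v ∈ C ∧ e - v ∈ C) ∧ u = s • v := by
  refine ⟨s⁻¹ • u, ?_, (smul_inv_smul₀ hs.ne' u).symm⟩
  have := add_and_sub_mem_interior_of_abs_lt_one hp hC he (v := s⁻¹ • u) fun t ht => by
    have := hu _ ((mem_eigenvalueSet_smul hp (inv_ne_zero hs.ne') u).1 ht)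
    rwa [div_inv_eq_mul, abs_mul, abs_of_pos hs, mul_lt_iff_lt_one_left hs] at this
  exact ⟨interior_subset this.1, interior_subset this.2⟩

theorem sInf_eq_sSup_abs_eigenvalueSet (hp : ∀ (c : ℝ) x, p (c • x) = c ^ n * p x)
    (hC : interior (C : Set E) = connectedComponentIn {x | p x ≠ 0} e)
    (he : e ∈ interior (C : Set E)) (u : E) :
    sInf {s : ℝ | 0 ≤ s ∧ ∃ v, (e + v ∈ C ∧ e - v ∈ C) ∧ u = s • v} =
      sSup ((|·|) '' eigenvalueSet p e u) := by
  set T := {s : ℝ | 0 ≤ s ∧ ∃ v, (e + v ∈ C ∧ e - v ∈ C) ∧ u = s • v}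
  set A := (|·|) '' eigenvalueSet p e u
  obtain ⟨s, hs, hplus, hminus⟩ := exists_pos_add_smul_mem_interior he u
  have hT : s⁻¹ ∈ T := ⟨(inv_pos.2 hs).le, s • u,
    ⟨interior_subset hplus, interior_subset hminus⟩, (inv_smul_smul₀ hs.ne' u).symm⟩
  have hbound : ∀ r ∈ T, ∀ a ∈ A, a ≤ r := by
    rintro r ⟨hr, v, hv, hu⟩ _ ⟨t, ht, rfl⟩
    exact abs_le_of_eq_smul hp hC he hr hv hu ht
  have hA : 0 ≤ sSup A := Real.sSup_nonneg (by rintro _ ⟨t, -, rfl⟩; exact abs_nonneg t)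
  refine le_antisymm (le_of_forall_gt_imp_ge_of_dense fun r hr => ?_)
    (le_csInf ⟨_, hT⟩ fun r hr => Real.sSup_le (hbound r hr) hr.1)
  refine csInf_le ⟨0, fun r hr => hr.1⟩ ⟨hA.trans hr.le, exists_eq_smul_of_abs_lt hp hC he
    (hA.trans_lt hr) fun t ht => (le_csSup ⟨_, hbound _ hT⟩ ⟨t, ht, rfl⟩).trans_lt hr⟩

end EigenvalueSet

theorem normInf_eq_max_abs_eigenvalue_general
    {d n : ℕ}
    (K : Set (EuclideanSpace ℝ (Fin d)))
    (hKconv : Convex ℝ K)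
    (hKcone : ∀ t : ℝ, 0 < t → ∀ x ∈ K, t • x ∈ K)
    (P : MvPolynomial (Fin d) ℝ) (hP : P.IsHomogeneous n)
    (e : EuclideanSpace ℝ (Fin d)) (he : e ∈ interior K)
    (hcomp : interior K =
      connectedComponentIn {x | MvPolynomial.eval (fun i => x i) P ≠ 0} e)
    (q : EuclideanSpace ℝ (Fin d) → Polynomial ℝ)
    (hq : ∀ x t, (q x).eval t = MvPolynomial.eval (fun i => x i - t * e i) P)
    (nInf : EuclideanSpace ℝ (Fin d) → ℝ)
    (hnInf : ∀ u, nInf u =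
      sInf {t : ℝ | 0 ≤ t ∧ ∃ v, (e + v ∈ K ∧ e - v ∈ K) ∧ u = t • v}) :
    ∀ u, nInf u = sSup {a : ℝ | ∃ lam ∈ (q u).roots, a = |lam|} := by
  let C : ConvexCone ℝ (EuclideanSpace ℝ (Fin d)) :=
    ⟨K, fun t ht x hx => hKcone t ht x hx,
      fun _ hx _ hy => hKconv.add_mem_of_forall_smul_mem hKcone hx hy⟩
  let p : EuclideanSpace ℝ (Fin d) → ℝ := fun x => MvPolynomial.eval (fun i => x i) P
  have hp : ∀ (c : ℝ) x, p (c • x) = c ^ n * p x := fun c x => hP.eval_smul c _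
  have hmem_roots : ∀ x t, t ∈ (q x).roots ↔ t ∈ eigenvalueSet p e x := fun x t => by
    obtain ⟨t₀, ht₀⟩ := exists_apply_sub_smul_ne_zero
      ((MvPolynomial.continuous_eval P).comp (PiLp.continuous_ofLp 2 _)) hp
      (connectedComponentIn_subset _ _ (hcomp ▸ he)) x
    have hq₀ : q x ≠ 0 := fun h =>
      ht₀ ((hq x t₀).symm.trans (by rw [h, Polynomial.eval_zero]))
    rw [Polynomial.mem_roots hq₀, Polynomial.IsRoot.def, hq]
    rfl
  intro u
  calc nInf u = sSup ((|·|) '' eigenvalueSet p e u) :=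
        (hnInf u).trans (sInf_eq_sSup_abs_eigenvalueSet (C := C) hp hcomp he u)
    _ = _ := by
      congr 1
      ext a
      simp [hmem_roots, eq_comm]

/-- Equation (2.4): `‖u‖_∞ = max_j |λ_j(u)|`, where `λ_j(u)` are the eigenvalues of
`u`, i.e. the roots of `λ ↦ p(u − λe)`. -/
theorem normInf_eq_max_abs_eigenvalue
    {d n : ℕ} (hn : 0 < n)
    (K : Set (EuclideanSpace ℝ (Fin d)))
    (hKclosed : IsClosed K) (hKconv : Convex ℝ K)
    (hKcone : ∀ t : ℝ, 0 < t → ∀ x ∈ K, t • x ∈ K)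
    (P : MvPolynomial (Fin d) ℝ) (hP : P.IsHomogeneous n)
    (e : EuclideanSpace ℝ (Fin d)) (he : e ∈ interior K)
    (hcomp : interior K =
      connectedComponentIn {x | MvPolynomial.eval (fun i => x i) P ≠ 0} e)
    (q : EuclideanSpace ℝ (Fin d) → Polynomial ℝ)
    (hq : ∀ x t, (q x).eval t = MvPolynomial.eval (fun i => x i - t * e i) P)
    (hroots : ∀ x, Multiset.card (q x).roots = n)
    (nInf : EuclideanSpace ℝ (Fin d) → ℝ)
    (hnInf : ∀ u, nInf u =
      sInf {t : ℝ | 0 ≤ t ∧ ∃ v, (e + v ∈ K ∧ e - v ∈ K) ∧ u = t • v}) :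
    ∀ u, nInf u = sSup {a : ℝ | ∃ lam ∈ (q u).roots, a = |lam|} :=
  normInf_eq_max_abs_eigenvalue_general K hKconv hKcone P hP e he hcomp q hq nInf hnInf
end
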